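/- If W ∈ ℤ[B_n] lies in I^{(m)}, the m-th power of the ideal generated by {σ_i − σ_i^{−1}}, then every entry of K(W), written as a polynomial in (t+1) and (q−1), has lowest total degree at least m. -/

import Mathlib

open Matrix

noncomputable section

/-- Braid relations among the Artin generators `σ_1, …, σ_{n-1}`
(indexed here by `Fin (n-1)`, with `i : Fin (n-1)` standing for `σ_{i+1}`). -/
def braidRels (n : ℕ) : Set (FreeGroup (Fin (n - 1))) :=
  {r | (∃ i j : Fin (n - 1), (i : ℕ) + 1 = (j : ℕ) ∧
          r = .of i * .of j * .of i * (.of j * .of i * .of j)⁻¹) ∨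
       (∃ i j : Fin (n - 1), (i : ℕ) + 2 ≤ (j : ℕ) ∧
          r = .of i * .of j * (.of j * .of i)⁻¹)}

/-- The braid group `B_n` as a presented group. -/
abbrev Braid (n : ℕ) := PresentedGroup (braidRels n)

/-- The Artin generator `σ_{i+1}` of `B_n`. -/
def σg {n : ℕ} (i : Fin (n - 1)) : Braid n := PresentedGroup.of i

/-- Index set `{(i,j) : 1 ≤ i < j ≤ n}` for the Lawrence–Krammer basis `X_{i,j}`. -/
abbrev BP (n : ℕ) := {p : Fin (n + 1) × Fin (n + 1) // 0 < (p.1 : ℕ) ∧ (p.1 : ℕ) < (p.2 : ℕ)}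

/-- The standard basis row vector `X_{a,b}`. -/
def ee {R : Type*} [CommRing R] (n a b : ℕ) : BP n → R :=
  fun c => if (c.val.1 : ℕ) = a ∧ (c.val.2 : ℕ) = b then 1 else 0

/-- The Lawrence–Krammer matrix of the Artin generator `σ_m` (1-based `m`),
with parameters `t`, `q`; row `(i,j)` is the expansion of `X_{i,j}·σ_m` in the basis. -/
def LKgen {R : Type*} [CommRing R] (t q : R) (n m : ℕ) : Matrix (BP n) (BP n) R :=
  fun r c =>
    let i := (r.val.1 : ℕ); let j := (r.val.2 : ℕ)
    if m = i ∧ j = i + 1 then -(t * q ^ 2) * ee n i j c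
    else if m = i then
      q * ee n (i + 1) j c + (1 - q) * ee n i j c + t * q * (1 - q) * ee n i (i + 1) c
    else if m = j then
      q * ee n i (j + 1) c + (1 - q) * ee n i j c - q * (1 - q) * ee n j (j + 1) c
    else if m + 1 = i then ee n (i - 1) j c
    else if m + 1 = j then ee n i (j - 1) c
    else ee n i j c

/-- The field `ℚ(t,q)` of rational functions in two variables. -/
abbrev F2 := FractionRing (MvPolynomial (Fin 2) ℚ)

/-- The variable `t` in `ℚ(t,q)`. -/
def tt : F2 := algebraMap (MvPolynomial (Fin 2) ℚ) F2 (MvPolynomial.X 0)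

/-- The variable `q` in `ℚ(t,q)`. -/
def qq : F2 := algebraMap (MvPolynomial (Fin 2) ℚ) F2 (MvPolynomial.X 1)

/-- The power-series ring `ℚ[[t+1, q−1]]`: power series in `u = t+1` and `v = q−1`. -/
abbrev PS := MvPowerSeries (Fin 2) ℚ

/-- The variable `t = u − 1` in `ℚ[[u,v]]`, where `u = t + 1`. -/
def tP : PS := MvPowerSeries.X 0 - 1

/-- The variable `q = v + 1` in `ℚ[[u,v]]`, where `v = q − 1`. -/
def qP : PS := MvPowerSeries.X 1 + 1

/-- The `m`-th power `I^(m)` of the two-sided ideal of the group ring `ℤ[B_n]` generated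
by the elements `σ_i − σ_i⁻¹`, described as the `ℤ`-span of products with `m` factors
`σ_i − σ_i⁻¹` interleaved with arbitrary group ring elements. -/
def Ipow (n : ℕ) : ℕ → Submodule ℤ (MonoidAlgebra ℤ (Braid n))
  | 0 => ⊤
  | m + 1 =>
    Submodule.span ℤ
      {x | ∃ w ∈ Ipow n m, ∃ (i : Fin (n - 1)) (a : MonoidAlgebra ℤ (Braid n)),
        x = w * (MonoidAlgebra.of ℤ (Braid n) (σg i) -
                 MonoidAlgebra.of ℤ (Braid n) ((σg i)⁻¹)) * a}

/-!
At `t = -1`, `q = 1`, i.e. on constant coefficients in `u = t + 1`, `v = q - 1`, the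
Lawrence–Krammer matrix of `σ_k` becomes the permutation matrix of the transposition `k ↔ k+1`
acting on the pairs `i < j`. It is an involution, so `K(σ_i)` and `K(σ_i⁻¹) = K(σ_i)⁻¹` agree
modulo the maximal ideal `𝔪 = (u, v)`. Matrices with entries in `𝔪^a` times matrices with
entries in `𝔪^b` have entries in `𝔪^(a+b)`, hence `K` maps `I^(m)` to matrices over `𝔪^m`, and
every element of `𝔪^m` has order at least `m`.
-/

theorem Ideal.mul_mem_matrix_mul {R ι : Type*} [CommSemiring R] [Fintype ι] [DecidableEq ι]
    {I J : Ideal R} {M N : Matrix ι ι R} (hM : M ∈ I.matrix ι) (hN : N ∈ J.matrix ι) :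
    M * N ∈ (I * J).matrix ι := fun r c =>
  Ideal.sum_mem _ fun p _ => Ideal.mul_mem_mul (hM r p) (hN p c)

theorem MvPowerSeries.le_order_of_mem_ker_constantCoeff_pow {σ R : Type*} [CommSemiring R]
    {m : ℕ} {f : MvPowerSeries σ R} (hf : f ∈ RingHom.ker constantCoeff ^ m) :
    (m : ℕ∞) ≤ f.order := by
  induction m generalizing f with
  | zero => simp
  | succ m ih =>
    rw [pow_succ] at hf
    refine Submodule.mul_induction_on hf (fun g hg h hh => ?_) fun g h hg hh => ?_
    · have h1 : 1 ≤ h.order := one_le_order_iff_constCoeff_eq_zero.mpr hh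
      push_cast
      exact (add_le_add (ih hg) h1).trans le_order_mul
    · exact (le_min hg hh).trans min_order_le_add

theorem mem_matrix_pow_of_mem_Ipow {n : ℕ} {S ι : Type*} [CommRing S] [Fintype ι]
    [DecidableEq ι] (L : MonoidAlgebra ℤ (Braid n) →+* Matrix ι ι S) (J : Ideal S)
    (hL : ∀ i, L (MonoidAlgebra.of ℤ _ (σg i) - MonoidAlgebra.of ℤ _ (σg i)⁻¹) ∈ J.matrix ι) :
    ∀ {m : ℕ} {W : MonoidAlgebra ℤ (Braid n)}, W ∈ Ipow n m → L W ∈ (J ^ m).matrix ι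
  | 0, W, _ => by simp
  | m + 1, W, hW => by
    induction hW using Submodule.span_induction with
    | mem x hx =>
      obtain ⟨w, hw, i, a, rfl⟩ := hx
      -- `Ideal.matrix` is only a left ideal: the right factor is absorbed as a matrix over `⊤`
      rw [map_mul, map_mul, ← Ideal.mul_top (J ^ (m + 1)), pow_succ]
      exact Ideal.mul_mem_matrix_mul
        (Ideal.mul_mem_matrix_mul (mem_matrix_pow_of_mem_Ipow L J hL hw) (hL i)) fun _ _ => trivial
    | zero => simp
    | add x y _ _ hx hy => simpa using add_mem hx hy
    | smul z x _ hx => simpa using zsmul_mem hx z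

theorem LKgen_map {R S : Type*} [CommRing R] [CommRing S] (f : R →+* S) (t q : R) (n k : ℕ) :
    (LKgen t q n k).map f = LKgen (f t) (f q) n k := by
  ext r c
  simp only [LKgen, Matrix.map_apply, ee]
  split_ifs <;> simp

namespace BP

variable {n k : ℕ}

def swapAdj (hk : 1 ≤ k) (hkn : k + 1 ≤ n) (r : BP n) : BP n :=
  let s := Equiv.swap k (k + 1)
  have hi := r.2.1
  have hij := r.2.2
  have hj := r.1.2.isLt
  ⟨(⟨min (s r.1.1) (s r.1.2), by simp only [s, Equiv.swap_apply_def]; split_ifs <;> omega⟩,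
    ⟨max (s r.1.1) (s r.1.2), by simp only [s, Equiv.swap_apply_def]; split_ifs <;> omega⟩),
    by simp only [s, Equiv.swap_apply_def]; split_ifs <;> omega,
    by simp only [s, Equiv.swap_apply_def]; split_ifs <;> omega⟩

theorem swapAdj_involutive (hk : 1 ≤ k) (hkn : k + 1 ≤ n) :
    Function.Involutive (swapAdj hk hkn) := fun r => by
  have hij := r.2.2
  ext <;> simp only [swapAdj, Equiv.swap_apply_def] <;> split_ifs <;> omega

end BP

theorem ee_eq_ite {R : Type*} [CommRing R] {n : ℕ} (p c : BP n) :
    (ee n p.1.1 p.1.2 c : R) = if p = c then 1 else 0 := by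
  simp [ee, Subtype.ext_iff, Prod.ext_iff, Fin.ext_iff, eq_comm]

theorem LKgen_neg_one_one {R : Type*} [CommRing R] {n k : ℕ} (hk : 1 ≤ k) (hkn : k + 1 ≤ n) :
    LKgen (-1 : R) 1 n k = (BP.swapAdj_involutive hk hkn).toPerm.permMatrix R := by
  ext r c
  simp only [Equiv.Perm.permMatrix, PEquiv.toMatrix_apply, Equiv.toPEquiv_apply, Option.mem_def,
    Option.some_inj, Function.Involutive.coe_toPerm]
  rw [← ee_eq_ite]
  have hij := r.2.2
  simp only [LKgen]
  split_ifs <;> norm_num <;> congr 1 <;> dsimp only [BP.swapAdj] <;>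
    simp only [Equiv.swap_apply_def] <;> split_ifs <;> omega

theorem LKgen_neg_one_one_mul_self {R : Type*} [CommRing R] {n k : ℕ} (hk : 1 ≤ k)
    (hkn : k + 1 ≤ n) : LKgen (-1 : R) 1 n k * LKgen (-1 : R) 1 n k = 1 := by
  have he : (BP.swapAdj_involutive hk hkn).toPerm * (BP.swapAdj_involutive hk hkn).toPerm = 1 :=
    Equiv.ext (BP.swapAdj_involutive hk hkn)
  rw [LKgen_neg_one_one hk hkn, ← Matrix.permMatrix_mul, he, Matrix.permMatrix_one]

theorem lk_sub_inv_mem_matrix_ker_constantCoeff {n : ℕ} (K : Braid n →* GL (BP n) PS)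
    (hK : ∀ m : Fin (n - 1),
      (K (σg m) : Matrix (BP n) (BP n) PS) = LKgen tP qP n ((m : ℕ) + 1))
    (i : Fin (n - 1)) :
    (K (σg i) - K (σg i)⁻¹ : Matrix (BP n) (BP n) PS) ∈
      (RingHom.ker MvPowerSeries.constantCoeff).matrix (BP n) := by
  set φ := (MvPowerSeries.constantCoeff : PS →+* ℚ).mapMatrix (m := BP n)
  have hσ : φ (K (σg i)) = LKgen (-1) 1 n ((i : ℕ) + 1) := by
    rw [hK, RingHom.mapMatrix_apply, LKgen_map]
    simp [tP, qP]
  have hσσ : φ (K (σg i)) * φ (K (σg i)) = 1 := by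
    rw [hσ]; exact LKgen_neg_one_one_mul_self le_add_self (by omega)
  have hinv : φ ↑(K (σg i))⁻¹ = φ (K (σg i)) :=
    left_inv_eq_right_inv (by rw [← map_mul, Units.inv_mul, map_one]) hσσ
  refine (Ideal.mem_matrix _ _ _).2 fun r c => ?_
  rw [RingHom.mem_ker, Matrix.sub_apply, map_sub, map_inv, sub_eq_zero]
  exact congrFun (congrFun hinv r) c |>.symm

/-- If `W ∈ I^(m)`, then every entry of `K(W)`, expanded as a power
series in `(t+1)` and `(q−1)`, has lowest total degree at least `m`: all coefficients of
total degree `< m` vanish. -/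
theorem lk_ideal_power_low_degree (n : ℕ) (K : Braid n →* GL (BP n) PS)
    (hK : ∀ m : Fin (n - 1),
      (K (σg m) : Matrix (BP n) (BP n) PS) = LKgen tP qP n ((m : ℕ) + 1))
    (m : ℕ) (W : MonoidAlgebra ℤ (Braid n)) (hW : W ∈ Ipow n m) (r c : BP n)
    (d : Fin 2 →₀ ℕ) (hd : d 0 + d 1 < m) :
    MvPowerSeries.coeff d
      ((MonoidAlgebra.lift ℤ (Matrix (BP n) (BP n) PS) (Braid n)
          ((Units.coeHom (Matrix (BP n) (BP n) PS)).comp K) W) r c) = 0 := by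
  set L := MonoidAlgebra.lift ℤ (Matrix (BP n) (BP n) PS) (Braid n)
    ((Units.coeHom (Matrix (BP n) (BP n) PS)).comp K)
  have hgen : ∀ i, L.toRingHom (MonoidAlgebra.of ℤ _ (σg i) - MonoidAlgebra.of ℤ _ (σg i)⁻¹) ∈
      (RingHom.ker MvPowerSeries.constantCoeff).matrix (BP n) := fun i => by
    simpa [L] using lk_sub_inv_mem_matrix_ker_constantCoeff K hK i
  have hord := MvPowerSeries.le_order_of_mem_ker_constantCoeff_pow
    (mem_matrix_pow_of_mem_Ipow L.toRingHom _ hgen hW r c)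
  refine MvPowerSeries.coeff_of_lt_order (lt_of_lt_of_le ?_ hord)
  rw [Finsupp.degree_eq_sum, Fin.sum_univ_two]
  exact_mod_cast hd
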